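/- arXiv:2205.09783 — 5 statements merged into one kernel-verified Lean document; each statement's English description precedes it below -/
import Mathlib

section
/- Let (x_i, f_i) be a Schauder frame for a Banach space X such that (f_i, x_i) is a Schauder frame for X* (i.e., the frame is shrinking). Then for each f ∈ X*, lim_{m,n→∞} ‖f ∘ P_{[m,n]}‖ = 0, where P_{[m,n]}x = ∑_{i=m}^n f_i(x) x_i. -/
open Filter Finset

/- Composing `g` with `P_{[m,n]}` gives the block `∑_{i=m}^n g(x_i) f_i` of the series
`∑ g(x_i) f_i`, which converges in norm to `g` by shrinkingness; the blocks of a convergent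
series, being differences of its partial sums, tend to zero by the Cauchy criterion. -/

theorem ContinuousLinearMap.comp_sum_smulRight {𝕜 E ι : Type*} [NontriviallyNormedField 𝕜]
    [NormedAddCommGroup E] [NormedSpace 𝕜 E] (g : E →L[𝕜] 𝕜) (x : ι → E) (f : ι → E →L[𝕜] 𝕜)
    (s : Finset ι) :
    g.comp (∑ i ∈ s, (f i).smulRight (x i)) = ∑ i ∈ s, g (x i) • f i := by
  ext v
  simp [mul_comm]

theorem norm_sum_Icc_lt_of_cauchySeq {E : Type*} [SeminormedAddCommGroup E] {a : ℕ → E}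
    (ha : CauchySeq fun n => ∑ i ∈ range n, a i) {ε : ℝ} (hε : 0 < ε) :
    ∃ M : ℕ, ∀ m n : ℕ, M ≤ m → m ≤ n → ‖∑ i ∈ Icc m n, a i‖ < ε := by
  obtain ⟨M, hM⟩ := Metric.cauchySeq_iff.mp ha ε hε
  refine ⟨M, fun m n hm hmn => ?_⟩
  have hblock : ∑ i ∈ Icc m n, a i = ∑ i ∈ range (n + 1), a i - ∑ i ∈ range m, a i := by
    rw [← Ico_add_one_right_eq_Icc, sum_Ico_eq_sub _ (by omega)]
  rw [hblock, ← dist_eq_norm]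
  exact hM (n + 1) (by omega) m hm

theorem stmt_2_general (X : Type*) [NormedAddCommGroup X] [NormedSpace ℝ X]
    (x : ℕ → X) (f : ℕ → X →L[ℝ] ℝ)
    (hshrink : ∀ g : X →L[ℝ] ℝ,
      Tendsto (fun n => ∑ i ∈ Finset.range n, g (x i) • f i) atTop (nhds g)) :
    ∀ g : X →L[ℝ] ℝ, ∀ ε > 0, ∃ M : ℕ, ∀ m n : ℕ, M ≤ m → m ≤ n →
      ‖g.comp (∑ i ∈ Finset.Icc m n, (f i).smulRight (x i))‖ < ε := by
  intro g ε hε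
  simp only [g.comp_sum_smulRight]
  exact norm_sum_Icc_lt_of_cauchySeq (hshrink g).cauchySeq hε

/-- for a shrinking Schauder frame, `‖f ∘ P_{[m,n]}‖ → 0` as `m, n → ∞`. -/
theorem stmt_2 (X : Type*) [NormedAddCommGroup X] [NormedSpace ℝ X] [CompleteSpace X]
    (x : ℕ → X) (f : ℕ → X →L[ℝ] ℝ)
    (hframe : ∀ v : X, Tendsto (fun n => ∑ i ∈ Finset.range n, f i v • x i) atTop (nhds v))
    (hshrink : ∀ g : X →L[ℝ] ℝ,
      Tendsto (fun n => ∑ i ∈ Finset.range n, g (x i) • f i) atTop (nhds g)) :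
    ∀ g : X →L[ℝ] ℝ, ∀ ε > 0, ∃ M : ℕ, ∀ m n : ℕ, M ≤ m → m ≤ n →
      ‖g.comp (∑ i ∈ Finset.Icc m n, (f i).smulRight (x i))‖ < ε :=
  stmt_2_general X x f hshrink
end

section
/- Let (x_i, f_i) be a shrinking Schauder frame for a Banach space X. Then there is a strictly increasing sequence (N_k) of natural numbers with N_k > k such that for all k, all m_0 ≤ n_0 ≤ k, all N_k ≤ m ≤ n, and all x ∈ X, ‖P_{[m_0,n_0]} P_{[m,n]} x‖ ≤ 2^{−k} ‖x‖. -/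
open Filter Finset

/-- Proposition 3.1: existence of the sequence `(N_k)` for a shrinking
Schauder frame, with `‖P_{[m₀,n₀]} P_{[m,n]} x‖ ≤ 2^{-k} ‖x‖`. -/
theorem stmt_3 (X : Type*) [NormedAddCommGroup X] [NormedSpace ℝ X] [CompleteSpace X]
    (x : ℕ → X) (f : ℕ → X →L[ℝ] ℝ)
    (hframe : ∀ v : X, Tendsto (fun n => ∑ i ∈ Finset.range n, f i v • x i) atTop (nhds v))
    (hshrink : ∀ g : X →L[ℝ] ℝ,
      Tendsto (fun n => ∑ i ∈ Finset.range n, g (x i) • f i) atTop (nhds g)) :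
    ∃ N : ℕ → ℕ, StrictMono N ∧ (∀ k, k < N k) ∧
      ∀ k m₀ n₀ m n : ℕ, m₀ ≤ n₀ → n₀ ≤ k → N k ≤ m → m ≤ n → ∀ v : X,
        ‖∑ j ∈ Finset.Icc m₀ n₀, f j (∑ i ∈ Finset.Icc m n, f i v • x i) • x j‖
          ≤ (2 : ℝ)⁻¹ ^ k * ‖v‖ := by
  -- Step 1: for each k there is M such that for all j ≤ k the tails are small.
  have key : ∀ k : ℕ, ∃ M : ℕ, ∀ j ≤ k, ∀ m n : ℕ, M ≤ m → m ≤ n →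
      ‖∑ i ∈ Finset.Icc m n, (f j (x i)) • f i‖ * ‖x j‖ ≤ (2:ℝ)⁻¹ ^ k / (k+1) := by
    intro k
    have hMj : ∀ j : ℕ, ∃ M : ℕ, ∀ m n : ℕ, M ≤ m → m ≤ n →
        ‖∑ i ∈ Finset.Icc m n, (f j (x i)) • f i‖ * ‖x j‖ ≤ (2:ℝ)⁻¹ ^ k / (k+1) := by
      intro j
      have hc : CauchySeq (fun n => ∑ i ∈ Finset.range n, (f j (x i)) • f i) :=
        (hshrink (f j)).cauchySeq
      have hε : (0:ℝ) < ((2:ℝ)⁻¹ ^ k / (k+1)) / (‖x j‖ + 1) := by positivity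
      obtain ⟨M, hMc⟩ := Metric.cauchySeq_iff.mp hc _ hε
      refine ⟨M, fun m n hm hmn => ?_⟩
      have h1 : ∑ i ∈ Finset.Icc m n, (f j (x i)) • f i
          = ∑ i ∈ Finset.range (n+1), (f j (x i)) • f i
            - ∑ i ∈ Finset.range m, (f j (x i)) • f i := by
        rw [← Finset.Ico_add_one_right_eq_Icc, Finset.sum_Ico_eq_sub _ (by omega)]
      have h2 := hMc (n+1) (by omega) m hm
      rw [dist_eq_norm] at h2
      rw [h1]
      calc ‖∑ i ∈ Finset.range (n+1), (f j (x i)) • f i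
              - ∑ i ∈ Finset.range m, (f j (x i)) • f i‖ * ‖x j‖
          ≤ (((2:ℝ)⁻¹ ^ k / (k+1)) / (‖x j‖ + 1)) * (‖x j‖ + 1) := by
            apply mul_le_mul h2.le (by linarith [norm_nonneg (x j)]) (norm_nonneg _) hε.le
        _ = (2:ℝ)⁻¹ ^ k / (k+1) := by
            field_simp
      done
    choose M hM using hMj
    refine ⟨(Finset.range (k+1)).sup M, fun j hj m n hm hmn => ?_⟩
    exact hM j m n (le_trans (Finset.le_sup (Finset.mem_range.mpr (by omega))) hm) hmn
  choose Mf hMf using key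
  -- Step 2: build the strictly increasing sequence N.
  set N : ℕ → ℕ := fun k =>
    Nat.rec (max (Mf 0) 1) (fun k Nk => max (Mf (k+1)) (max Nk (k+1) + 1)) k with hN
  have hNsucc : ∀ k, N (k+1) = max (Mf (k+1)) (max (N k) (k+1) + 1) := fun k => rfl
  have hmono : StrictMono N := by
    apply strictMono_nat_of_lt_succ
    intro k
    rw [hNsucc]
    omega
  have hgt : ∀ k, k < N k := by
    intro k
    cases k with
    | zero => simp [hN]
    | succ k => rw [hNsucc]; omega
  have hMle : ∀ k, Mf k ≤ N k := by
    intro k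
    cases k with
    | zero => simp [hN]
    | succ k => rw [hNsucc]; omega
  refine ⟨N, hmono, hgt, ?_⟩
  intro k m₀ n₀ m n hm₀n₀ hn₀k hm hmn v
  have hm' : Mf k ≤ m := le_trans (hMle k) hm
  -- per-term bound
  have hterm : ∀ j ∈ Finset.Icc m₀ n₀,
      ‖f j (∑ i ∈ Finset.Icc m n, f i v • x i) • x j‖
        ≤ ((2:ℝ)⁻¹ ^ k / (k+1)) * ‖v‖ := by
    intro j hj
    have hjk : j ≤ k := le_trans (Finset.mem_Icc.mp hj).2 hn₀k
    have hG := hMf k j hjk m n hm' hmn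
    have happ : f j (∑ i ∈ Finset.Icc m n, f i v • x i)
        = (∑ i ∈ Finset.Icc m n, (f j (x i)) • f i) v := by
      rw [map_sum]
      simp only [ContinuousLinearMap.sum_apply, ContinuousLinearMap.smul_apply,
        map_smul]
      apply Finset.sum_congr rfl
      intro i _
      simp [smul_eq_mul, mul_comm]
    rw [norm_smul, happ]
    calc ‖(∑ i ∈ Finset.Icc m n, (f j (x i)) • f i) v‖ * ‖x j‖
        ≤ (‖∑ i ∈ Finset.Icc m n, (f j (x i)) • f i‖ * ‖v‖) * ‖x j‖ := by
          gcongr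
          exact (∑ i ∈ Finset.Icc m n, (f j (x i)) • f i).le_opNorm v
      _ = (‖∑ i ∈ Finset.Icc m n, (f j (x i)) • f i‖ * ‖x j‖) * ‖v‖ := by ring
      _ ≤ ((2:ℝ)⁻¹ ^ k / (k+1)) * ‖v‖ := by
          gcongr
  calc ‖∑ j ∈ Finset.Icc m₀ n₀, f j (∑ i ∈ Finset.Icc m n, f i v • x i) • x j‖
      ≤ ∑ j ∈ Finset.Icc m₀ n₀, ‖f j (∑ i ∈ Finset.Icc m n, f i v • x i) • x j‖ :=
        norm_sum_le _ _
    _ ≤ ∑ _j ∈ Finset.Icc m₀ n₀, ((2:ℝ)⁻¹ ^ k / (k+1)) * ‖v‖ :=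
        Finset.sum_le_sum hterm
    _ = ((Finset.Icc m₀ n₀).card : ℝ) * (((2:ℝ)⁻¹ ^ k / (k+1)) * ‖v‖) := by
        rw [Finset.sum_const, nsmul_eq_mul]
    _ ≤ ((k:ℝ)+1) * (((2:ℝ)⁻¹ ^ k / (k+1)) * ‖v‖) := by
        have hcard : ((Finset.Icc m₀ n₀).card : ℝ) ≤ (k:ℝ)+1 := by
          rw [Nat.card_Icc]
          have : n₀ + 1 - m₀ ≤ k + 1 := by omega
          exact_mod_cast this
        gcongr
    _ = (2:ℝ)⁻¹ ^ k * ‖v‖ := by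
        field_simp
end

section
/- Let X be a Banach space with Schauder basis (x_i). If (x_i) is not shrinking, then there exist α > 0 and a normalized block sequence (y_i) of (x_i) which is α-ℓ₁⁺: ‖∑ a_i y_i‖ ≥ α ∑ a_i for every finitely supported sequence (a_i) of non-negative scalars. -/
/-!
Let `P_n` be the basis projections and `C` the basis constant. If the basis is not shrinking,
some functional `g` has `‖g - g ∘ P_n‖ > ε` for infinitely many `n`. For such `n` pick `w` with
`‖w‖ ≤ 1` and `g (w - P_n w) > ε`; since `P_N w → w`, some block `u = P_N w - P_n w` still has
`g u > ε`, while `‖u‖ ≤ 2C`. Normalizing, `g (u / ‖u‖) ≥ ε / 2C`. Successive such blocks `y_j`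
give, for `c ≥ 0`, `‖g‖ ‖∑ c_j y_j‖ ≥ g (∑ c_j y_j) ≥ (ε / 2C) ∑ c_j`.
-/

open Filter Finset Function

theorem exists_forall_mem_eq_of_pairwise_disjoint {ι α β : Type*} [Nonempty β] {S : ι → Set α}
    (hS : Pairwise (Disjoint on S)) (b : ι → α → β) :
    ∃ a : α → β, ∀ j, ∀ i ∈ S j, a i = b j i := by
  classical
  refine ⟨fun i => if h : ∃ j, i ∈ S j then b h.choose i else Classical.arbitrary β,
    fun j i hi => ?_⟩
  have h : ∃ j, i ∈ S j := ⟨j, hi⟩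
  have hj : h.choose = j := by
    by_contra hne
    exact Set.disjoint_left.1 (hS hne) h.choose_spec hi
  simp only [dif_pos h, hj]

theorem exists_successive_blocks {R M : Type*} [Semiring R] [AddCommMonoid M]
    [Module R M] (x : ℕ → M) (Q : M → Prop)
    (h : ∀ n₀, ∃ (m k : ℕ) (b : ℕ → R), n₀ ≤ m ∧ m ≤ k ∧ Q (∑ i ∈ Icc m k, b i • x i)) :
    ∃ (a : ℕ → R) (m k : ℕ → ℕ), (∀ j, m j ≤ k j) ∧ (∀ j, k j < m (j + 1)) ∧
      ∀ j, Q (∑ i ∈ Icc (m j) (k j), a i • x i) := by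
  obtain ⟨f, hf, hlt⟩ := exists_seq_of_forall_finset_exists
    (fun t : ℕ × ℕ × (ℕ → R) => t.1 ≤ t.2.1 ∧ Q (∑ i ∈ Icc t.1 t.2.1, t.2.2 i • x i))
    (fun t t' => t.2.1 < t'.1) fun s _ => by
      obtain ⟨m, k, b, hm, hmk, hQ⟩ := h (s.sup (·.2.1) + 1)
      exact ⟨(m, k, b), ⟨hmk, hQ⟩, fun t ht => (Nat.lt_succ_of_le (le_sup ht)).trans_le hm⟩
  have hdisj : Pairwise (Disjoint on fun j => Set.Icc (f j).1 (f j).2.1) :=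
    (pairwise_disjoint_on _).2 fun j j' hjj' => Set.disjoint_left.2 fun _ hi hi' =>
      (hi.2.trans_lt (hlt j j' hjj')).not_ge hi'.1
  obtain ⟨a, ha⟩ := exists_forall_mem_eq_of_pairwise_disjoint hdisj fun j => (f j).2.2
  refine ⟨a, fun j => (f j).1, fun j => (f j).2.1, fun j => (hf j).1,
    fun j => hlt j (j + 1) j.lt_succ_self, fun j => ?_⟩
  convert (hf j).2 using 2 with i hi
  rw [ha j i (by simpa using hi)]

section SchauderBasis

variable {X : Type*} [NormedAddCommGroup X] [NormedSpace ℝ X] (x : ℕ → X)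
  (xstar : ℕ → X →L[ℝ] ℝ)

noncomputable def basisProj (N : ℕ) : X →L[ℝ] X :=
  ∑ i ∈ range N, (xstar i).smulRight (x i)

theorem basisProj_apply (N : ℕ) (v : X) :
    basisProj x xstar N v = ∑ i ∈ range N, xstar i v • x i := by
  simp [basisProj]

theorem comp_basisProj (g : X →L[ℝ] ℝ) (N : ℕ) :
    g.comp (basisProj x xstar N) = ∑ i ∈ range N, g (x i) • xstar i := by
  ext v
  simp [basisProj_apply, mul_comm]

theorem basisProj_succ_sub_basisProj {m k : ℕ} (h : m ≤ k + 1) (v : X) :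
    basisProj x xstar (k + 1) v - basisProj x xstar m v = ∑ i ∈ Icc m k, xstar i v • x i := by
  rw [basisProj_apply, basisProj_apply, ← sum_Ico_eq_sub _ h, Finset.Ico_add_one_right_eq_Icc]

variable {x xstar}

theorem tendsto_basisProj (hbasis : ∀ v : X,
      Tendsto (fun n => ∑ i ∈ range n, xstar i v • x i) atTop (nhds v)) (v : X) :
    Tendsto (fun N => basisProj x xstar N v) atTop (nhds v) := by
  simpa only [basisProj_apply] using hbasis v

theorem exists_pos_norm_basisProj_le [CompleteSpace X]
    (hbasis : ∀ v, Tendsto (fun N => basisProj x xstar N v) atTop (nhds v)) :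
    ∃ C, 0 < C ∧ ∀ N, ‖basisProj x xstar N‖ ≤ C := by
  obtain ⟨C, hC⟩ := banach_steinhaus (g := basisProj x xstar) fun v => by
    obtain ⟨B, hB⟩ := (hbasis v).norm.bddAbove_range
    exact ⟨B, fun N => hB ⟨N, rfl⟩⟩
  exact ⟨max C 1, one_pos.trans_le (le_max_right _ _), fun N => (hC N).trans (le_max_left _ _)⟩

theorem exists_apply_basisProj_sub_gt
    (hbasis : ∀ v, Tendsto (fun N => basisProj x xstar N v) atTop (nhds v)) (g : X →L[ℝ] ℝ)
    {ε : ℝ} {n : ℕ} (hn : ε < ‖g - g.comp (basisProj x xstar n)‖) :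
    ∃ k w, n ≤ k ∧ ‖w‖ ≤ 1 ∧
      ε < g (basisProj x xstar (k + 1) w - basisProj x xstar n w) := by
  obtain ⟨w, hw, hεw⟩ : ∃ w : X, ‖w‖ ≤ 1 ∧ ε < g (w - basisProj x xstar n w) := by
    obtain ⟨w, hw, hεw⟩ := (g - g.comp (basisProj x xstar n)).exists_lt_apply_of_lt_opNorm hn
    rcases lt_abs.1 (Real.norm_eq_abs _ ▸ hεw) with h | h
    · exact ⟨w, hw.le, by simpa using h⟩
    · exact ⟨-w, by simpa using hw.le, by simpa [neg_add_eq_sub] using h⟩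
  have hlim : Tendsto (fun k => g (basisProj x xstar (k + 1) w - basisProj x xstar n w)) atTop
      (nhds (g (w - basisProj x xstar n w))) :=
    (g.continuous.tendsto _).comp (((hbasis w).comp (tendsto_add_atTop_nat 1)).sub_const _)
  obtain ⟨k, hk, hnk⟩ := ((hlim.eventually (lt_mem_nhds hεw)).and (eventually_ge_atTop n)).exists
  exact ⟨k, w, hnk, hw, hk⟩

theorem exists_normalized_block_apply_ge
    (hbasis : ∀ v, Tendsto (fun N => basisProj x xstar N v) atTop (nhds v)) {C : ℝ}
    (hC : ∀ N, ‖basisProj x xstar N‖ ≤ C) (g : X →L[ℝ] ℝ) {ε : ℝ} {n : ℕ} (hε : 0 < ε)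
    (hn : ε < ‖g - g.comp (basisProj x xstar n)‖) :
    ∃ (k : ℕ) (b : ℕ → ℝ), n ≤ k ∧ ‖∑ i ∈ Icc n k, b i • x i‖ = 1 ∧
      ε / (2 * C) ≤ g (∑ i ∈ Icc n k, b i • x i) := by
  obtain ⟨k, w, hnk, hw, hgu⟩ := exists_apply_basisProj_sub_gt hbasis g hn
  set u := basisProj x xstar (k + 1) w - basisProj x xstar n w with hu_def
  have hu : u ≠ 0 := fun h => by rw [h, map_zero] at hgu; linarith
  have hC0 : 0 ≤ C := (norm_nonneg _).trans (hC 0)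
  have hPw (N : ℕ) : ‖basisProj x xstar N w‖ ≤ C :=
    ((basisProj x xstar N).le_of_opNorm_le (hC N) w).trans (mul_le_of_le_one_right hC0 hw)
  have huC : ‖u‖ ≤ 2 * C := (norm_sub_le _ _).trans (by linarith [hPw (k + 1), hPw n])
  have hblock : ∑ i ∈ Icc n k, (‖u‖⁻¹ * xstar i w) • x i = ‖u‖⁻¹ • u := by
    simp only [hu_def, basisProj_succ_sub_basisProj x xstar (hnk.trans k.le_succ), smul_sum,
      smul_smul]
  refine ⟨k, fun i => ‖u‖⁻¹ * xstar i w, hnk, ?_⟩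
  rw [hblock, map_smul, smul_eq_mul, inv_mul_eq_div]
  exact ⟨norm_smul_inv_norm hu, div_le_div₀ (hε.trans hgu).le hgu.le (norm_pos_iff.2 hu) huC⟩

end SchauderBasis

theorem div_opNorm_mul_sum_le_norm_sum_smul {ι E : Type*} [SeminormedAddCommGroup E]
    [NormedSpace ℝ E] (f : E →L[ℝ] ℝ) {y : ι → E} {δ : ℝ} {s : Finset ι}
    (hy : ∀ j ∈ s, δ ≤ f (y j)) {c : ι → ℝ} (hc : ∀ i ∈ s, 0 ≤ c i) :
    δ / ‖f‖ * ∑ i ∈ s, c i ≤ ‖∑ i ∈ s, c i • y i‖ := by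
  rcases (norm_nonneg f).eq_or_lt with h | h
  · simp [← h]
  rw [div_mul_eq_mul_div, div_le_iff₀ h, mul_sum]
  calc ∑ i ∈ s, δ * c i ≤ ∑ i ∈ s, c i * f (y i) :=
        sum_le_sum fun i hi => by rw [mul_comm]; exact mul_le_mul_of_nonneg_left (hy i hi) (hc i hi)
    _ = f (∑ i ∈ s, c i • y i) := by simp only [map_sum, map_smul, smul_eq_mul]
    _ ≤ ‖∑ i ∈ s, c i • y i‖ * ‖f‖ :=
      (Real.le_norm_self _).trans ((f.le_opNorm _).trans_eq (mul_comm _ _))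

theorem stmt_5_general (X : Type*) [NormedAddCommGroup X] [NormedSpace ℝ X] [CompleteSpace X]
    (x : ℕ → X) (xstar : ℕ → X →L[ℝ] ℝ)
    (hbasis : ∀ v : X,
      Tendsto (fun n => ∑ i ∈ Finset.range n, xstar i v • x i) atTop (nhds v))
    (hnotshrinking : ¬ ∀ g : X →L[ℝ] ℝ,
      Tendsto (fun n => ∑ i ∈ Finset.range n, g (x i) • xstar i) atTop (nhds g)) :
    ∃ (α : ℝ) (y : ℕ → X) (a : ℕ → ℝ) (m k : ℕ → ℕ), 0 < α ∧
      (∀ j, m j ≤ k j) ∧ (∀ j, k j < m (j + 1)) ∧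
      (∀ j, y j = ∑ i ∈ Finset.Icc (m j) (k j), a i • x i) ∧
      (∀ j, ‖y j‖ = 1) ∧
      (∀ (s : Finset ℕ) (c : ℕ → ℝ), (∀ i, 0 ≤ c i) →
        α * ∑ i ∈ s, c i ≤ ‖∑ i ∈ s, c i • y i‖) := by
  have hP := tendsto_basisProj hbasis
  obtain ⟨C, hC0, hC⟩ := exists_pos_norm_basisProj_le hP
  obtain ⟨g, hg⟩ : ∃ g : X →L[ℝ] ℝ,
      ¬Tendsto (fun n => g.comp (basisProj x xstar n)) atTop (nhds g) := by
    push Not at hnotshrinking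
    simpa only [comp_basisProj] using hnotshrinking
  rw [Metric.tendsto_atTop] at hg
  push Not at hg
  obtain ⟨ε, hε, hfreq⟩ := hg
  set δ := ε / 2 / (2 * C)
  obtain ⟨a, m, k, hmk, hkm, hblock⟩ :=
    exists_successive_blocks x (fun y => ‖y‖ = 1 ∧ δ ≤ g y) fun n₀ => by
      obtain ⟨n, hn₀, hn⟩ := hfreq n₀
      rw [dist_comm, dist_eq_norm] at hn
      obtain ⟨k, b, hnk, hb⟩ :=
        exists_normalized_block_apply_ge hP hC g (n := n) (half_pos hε) (by linarith)
      exact ⟨n, k, b, hn₀, hnk, hb⟩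
  have hg0 : 0 < ‖g‖ :=
    calc 0 < δ := by positivity
      _ ≤ g (∑ i ∈ Icc (m 0) (k 0), a i • x i) := (hblock 0).2
      _ ≤ ‖g‖ := by
        simpa only [(hblock 0).1, mul_one] using
          (Real.le_norm_self _).trans (g.le_opNorm (∑ i ∈ Icc (m 0) (k 0), a i • x i))
  exact ⟨δ / ‖g‖, _, a, m, k, by positivity, hmk, hkm, fun j => rfl, fun j => (hblock j).1,
    fun s c hc => div_opNorm_mul_sum_le_norm_sum_smul g (fun j _ => (hblock j).2) fun i _ => hc i⟩

/-- if a Schauder basis is not shrinking then there is a normalized block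
sequence which is `α`-`ℓ₁⁺` for some `α > 0`. -/
theorem stmt_5 (X : Type*) [NormedAddCommGroup X] [NormedSpace ℝ X] [CompleteSpace X]
    (x : ℕ → X) (xstar : ℕ → X →L[ℝ] ℝ)
    (hbi : ∀ i j, xstar i (x j) = if i = j then 1 else 0)
    (hbasis : ∀ v : X,
      Tendsto (fun n => ∑ i ∈ Finset.range n, xstar i v • x i) atTop (nhds v))
    (hnotshrinking : ¬ ∀ g : X →L[ℝ] ℝ,
      Tendsto (fun n => ∑ i ∈ Finset.range n, g (x i) • xstar i) atTop (nhds g)) :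
    ∃ (α : ℝ) (y : ℕ → X) (a : ℕ → ℝ) (m k : ℕ → ℕ), 0 < α ∧
      (∀ j, m j ≤ k j) ∧ (∀ j, k j < m (j + 1)) ∧
      (∀ j, y j = ∑ i ∈ Finset.Icc (m j) (k j), a i • x i) ∧
      (∀ j, ‖y j‖ = 1) ∧
      (∀ (s : Finset ℕ) (c : ℕ → ℝ), (∀ i, 0 ≤ c i) →
        α * ∑ i ∈ s, c i ≤ ‖∑ i ∈ s, c i • y i‖) :=
  stmt_5_general X x xstar hbasis hnotshrinking
end

section
/- Suppose (x_j, f_j) is a shrinking Schauder frame for X and W is an associated space of (x_j, f_j) with shrinking associated basis (w_j). Then there exists an increasing sequence (N_k) satisfying Proposition 3.1 such that the corresponding basis (z_j) of Z_{(N_k)} is dominated by (w_j): there exists K ≥ 1 with ‖∑ a_j z_j‖_{(N_k)} ≤ K ‖∑ a_j w_j‖ for all finitely supported (a_j). -/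
open Filter Finset Topology

/-!
Write `Q_{[m,n]}` (`tailProj`) for the basis projections of `W` and `P_{[m₀,n₀]}` (`frameProj`)
for the partial frame operators of `X`. As `(w_j)` is shrinking, `g ∘ Q_{[m,n]}` is a tail
`∑_{i=m}^n g(w_i) w_i^*` of the convergent expansion of `g ∈ W^*`, so `‖g ∘ Q_{[m,n]}‖ → 0`;
hence the same holds for finite-rank operators, in particular for the finitely many
`P_{[m₀,n₀]} ∘ S` with `n₀ ≤ k`, and `N_k` is chosen past the point where all of them are below
`2^{-k} / (‖T‖ + 1)`. Proposition 3.1 follows from `∑_{i=m}^n f_i(v) x_i = S Q_{[m,n]} T v`.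
For `u = ∑ a_j w_j` one has `∑_{i=m}^n a_i x_i = S Q_{[m,n]} u`, so the first part of the norm of
`Z_{(N_k)}` is at most `‖S‖ sup ‖Q_{[m,n]}‖ ‖u‖`, finite by uniform boundedness, and the second
is at most `‖u‖` by the choice of `N_k`.
-/

section PartialSums

variable {E : Type*} [SeminormedAddCommGroup E]

theorem norm_sum_Icc_le_dist_sum_range (g : ℕ → E) (m n : ℕ) :
    ‖∑ i ∈ Icc m n, g i‖ ≤ dist (∑ i ∈ range (n + 1), g i) (∑ i ∈ range m, g i) := by
  rcases le_or_gt m n with hmn | hnm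
  · rw [dist_eq_norm, ← sum_Ico_eq_sub _ (by omega), Ico_add_one_right_eq_Icc]
  · simp [Icc_eq_empty_of_lt hnm, dist_nonneg]

theorem CauchySeq.tendsto_norm_sum_Icc {g : ℕ → E}
    (h : CauchySeq fun n ↦ ∑ i ∈ range n, g i) :
    Tendsto (fun p : ℕ × ℕ ↦ ‖∑ i ∈ Icc p.1 p.2, g i‖) atTop (𝓝 0) := by
  have hdist := (cauchySeq_iff_tendsto_dist_atTop_0.mp h).comp
    (show Tendsto (fun p : ℕ × ℕ ↦ (p.2 + 1, p.1)) atTop atTop by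
      rw [← prod_atTop_atTop_eq]
      exact ((tendsto_add_atTop_nat 1).comp tendsto_snd).prodMk tendsto_fst)
  exact squeeze_zero (fun _ ↦ norm_nonneg _) (fun p ↦ norm_sum_Icc_le_dist_sum_range g p.1 p.2)
    hdist

theorem exists_norm_sum_Icc_le_of_tendsto {g : ℕ → E} {L : E}
    (h : Tendsto (fun n ↦ ∑ i ∈ range n, g i) atTop (𝓝 L)) :
    ∃ C, ∀ m n, ‖∑ i ∈ Icc m n, g i‖ ≤ C := by
  obtain ⟨C, hC⟩ := isBounded_iff_forall_norm_le.mp (Metric.isBounded_range_of_tendsto _ h)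
  refine ⟨C + C, fun m n ↦ ?_⟩
  calc ‖∑ i ∈ Icc m n, g i‖ ≤ ‖∑ i ∈ range (n + 1), g i‖ + ‖∑ i ∈ range m, g i‖ :=
        (norm_sum_Icc_le_dist_sum_range g m n).trans (dist_le_norm_add_norm _ _)
    _ ≤ C + C := add_le_add (hC _ ⟨_, rfl⟩) (hC _ ⟨_, rfl⟩)

end PartialSums

section Basis

variable {W : Type*} [NormedAddCommGroup W] [NormedSpace ℝ W] {w : ℕ → W} {wstar : ℕ → W →L[ℝ] ℝ}

variable (w wstar) in
def tailProj (m n : ℕ) : W →L[ℝ] W := ∑ i ∈ Icc m n, (wstar i).smulRight (w i)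

theorem tailProj_apply (m n : ℕ) (u : W) :
    tailProj w wstar m n u = ∑ i ∈ Icc m n, wstar i u • w i := by
  simp [tailProj]

theorem apply_sum_smul_of_biorthogonal (hbi : ∀ i j, wstar i (w j) = if i = j then 1 else 0)
    (c : ℕ → ℝ) (t : Finset ℕ) (i : ℕ) :
    wstar i (∑ j ∈ t, c j • w j) = if i ∈ t then c i else 0 := by
  simp [map_sum, hbi]

theorem apply_eq_of_tendsto_sum_smul (hbi : ∀ i j, wstar i (w j) = if i = j then 1 else 0)
    {c : ℕ → ℝ} {u : W} (h : Tendsto (fun n ↦ ∑ j ∈ range n, c j • w j) atTop (𝓝 u)) (i : ℕ) :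
    wstar i u = c i := by
  refine tendsto_nhds_unique (((wstar i).continuous.tendsto u).comp h)
    (tendsto_const_nhds.congr' ?_)
  filter_upwards [eventually_gt_atTop i] with n hn
  simp [apply_sum_smul_of_biorthogonal hbi, hn]

theorem exists_norm_tailProj_le [CompleteSpace W]
    (hbasis : ∀ u : W, Tendsto (fun n ↦ ∑ i ∈ range n, wstar i u • w i) atTop (𝓝 u)) :
    ∃ C, ∀ p : ℕ × ℕ, ‖tailProj w wstar p.1 p.2‖ ≤ C :=
  banach_steinhaus fun u ↦ by
    obtain ⟨C, hC⟩ := exists_norm_sum_Icc_le_of_tendsto (hbasis u)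
    exact ⟨C, fun p ↦ by simpa only [tailProj_apply] using hC p.1 p.2⟩

theorem comp_tailProj (g : W →L[ℝ] ℝ) (m n : ℕ) :
    g.comp (tailProj w wstar m n) = ∑ i ∈ Icc m n, g (w i) • wstar i := by
  ext u
  simp [tailProj_apply, mul_comm]

theorem tendsto_norm_comp_tailProj
    (hshrinking : ∀ g : W →L[ℝ] ℝ,
      Tendsto (fun n ↦ ∑ i ∈ range n, g (w i) • wstar i) atTop (𝓝 g))
    (g : W →L[ℝ] ℝ) :
    Tendsto (fun p : ℕ × ℕ ↦ ‖g.comp (tailProj w wstar p.1 p.2)‖) atTop (𝓝 0) := by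
  simpa only [comp_tailProj] using (hshrinking g).cauchySeq.tendsto_norm_sum_Icc

theorem tendsto_norm_sum_smulRight_comp_tailProj {E ι : Type*} [NormedAddCommGroup E]
    [NormedSpace ℝ E]
    (hshrinking : ∀ g : W →L[ℝ] ℝ,
      Tendsto (fun n ↦ ∑ i ∈ range n, g (w i) • wstar i) atTop (𝓝 g))
    (t : Finset ι) (g : ι → W →L[ℝ] ℝ) (y : ι → E) :
    Tendsto (fun p : ℕ × ℕ ↦
      ‖(∑ j ∈ t, (g j).smulRight (y j)).comp (tailProj w wstar p.1 p.2)‖) atTop (𝓝 0) := by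
  have hsum : Tendsto (fun p : ℕ × ℕ ↦
      ∑ j ∈ t, ‖(g j).comp (tailProj w wstar p.1 p.2)‖ * ‖y j‖) atTop (𝓝 0) := by
    simpa using tendsto_finsetSum t fun j _ ↦
      (tendsto_norm_comp_tailProj hshrinking (g j)).mul_const ‖y j‖
  refine squeeze_zero (fun _ ↦ norm_nonneg _) (fun p ↦ ?_) hsum
  calc ‖(∑ j ∈ t, (g j).smulRight (y j)).comp (tailProj w wstar p.1 p.2)‖
      = ‖∑ j ∈ t, ((g j).comp (tailProj w wstar p.1 p.2)).smulRight (y j)‖ := by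
        congr 1; ext u; simp
    _ ≤ _ := (norm_sum_le _ _).trans_eq (by simp only [ContinuousLinearMap.norm_smulRight_apply])

end Basis

section Frame

variable {X W : Type*} [NormedAddCommGroup X] [NormedSpace ℝ X]
  [NormedAddCommGroup W] [NormedSpace ℝ W]
  {x : ℕ → X} {f : ℕ → X →L[ℝ] ℝ} {w : ℕ → W} {wstar : ℕ → W →L[ℝ] ℝ} {S : W →L[ℝ] X}

variable (x f) in
def frameProj (m₀ n₀ : ℕ) : X →L[ℝ] X := ∑ j ∈ Icc m₀ n₀, (f j).smulRight (x j)

theorem frameProj_apply (m₀ n₀ : ℕ) (v : X) :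
    frameProj x f m₀ n₀ v = ∑ j ∈ Icc m₀ n₀, f j v • x j := by
  simp [frameProj]

theorem map_tailProj (hS : ∀ i, S (w i) = x i) (m n : ℕ) (u : W) :
    S (tailProj w wstar m n u) = ∑ i ∈ Icc m n, wstar i u • x i := by
  simp [tailProj_apply, hS]

theorem frameProj_comp (m₀ n₀ : ℕ) :
    (frameProj x f m₀ n₀).comp S = ∑ j ∈ Icc m₀ n₀, ((f j).comp S).smulRight (x j) := by
  ext u
  simp [frameProj]

theorem norm_frameProj_sum_Icc_le (hS : ∀ i, S (w i) = x i) {c : ℕ → ℝ} {u : W}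
    (hc : ∀ i, wstar i u = c i) {m₀ n₀ m n : ℕ} {δ : ℝ}
    (hδ : ‖((frameProj x f m₀ n₀).comp S).comp (tailProj w wstar m n)‖ ≤ δ) :
    ‖∑ j ∈ Icc m₀ n₀, f j (∑ i ∈ Icc m n, c i • x i) • x j‖ ≤ δ * ‖u‖ := by
  have happly : ((frameProj x f m₀ n₀).comp S).comp (tailProj w wstar m n) u
      = ∑ j ∈ Icc m₀ n₀, f j (∑ i ∈ Icc m n, c i • x i) • x j := by
    simp only [ContinuousLinearMap.comp_apply, map_tailProj hS, hc, frameProj_apply]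
  exact happly ▸ ContinuousLinearMap.le_of_opNorm_le _ hδ u

theorem norm_sum_Icc_smul_le (hS : ∀ i, S (w i) = x i) {c : ℕ → ℝ} {u : W}
    (hc : ∀ i, wstar i u = c i) {m n : ℕ} {C : ℝ} (hC : ‖tailProj w wstar m n‖ ≤ C) :
    ‖∑ i ∈ Icc m n, c i • x i‖ ≤ ‖S‖ * C * ‖u‖ := by
  calc ‖∑ i ∈ Icc m n, c i • x i‖ = ‖S (tailProj w wstar m n u)‖ := by
        simp only [map_tailProj hS, hc]
    _ ≤ ‖S‖ * (C * ‖u‖) := S.le_opNorm_of_le ((tailProj w wstar m n).le_of_opNorm_le hC u)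
    _ = ‖S‖ * C * ‖u‖ := (mul_assoc _ _ _).symm

theorem norm_frameProj_sum_Icc_le_of_tendsto {T : X →L[ℝ] W}
    (hbi : ∀ i j, wstar i (w j) = if i = j then 1 else 0) (hS : ∀ i, S (w i) = x i) {v : X}
    (hT : Tendsto (fun n ↦ ∑ i ∈ range n, f i v • w i) atTop (𝓝 (T v))) {m₀ n₀ m n : ℕ} {r : ℝ}
    (hr : ‖((frameProj x f m₀ n₀).comp S).comp (tailProj w wstar m n)‖ ≤ r / (‖T‖ + 1)) :
    ‖∑ j ∈ Icc m₀ n₀, f j (∑ i ∈ Icc m n, f i v • x i) • x j‖ ≤ r * ‖v‖ := by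
  calc _ ≤ r / (‖T‖ + 1) * ‖T v‖ :=
        norm_frameProj_sum_Icc_le hS (apply_eq_of_tendsto_sum_smul hbi hT) hr
    _ ≤ r / (‖T‖ + 1) * ((‖T‖ + 1) * ‖v‖) := by
        gcongr
        · exact (norm_nonneg _).trans hr
        · exact T.le_of_opNorm_le (le_add_of_nonneg_right zero_le_one) v
    _ = r * ‖v‖ := by field_simp

theorem exists_strictMono_norm_frameProj_comp_tailProj_le
    (hshrinking : ∀ g : W →L[ℝ] ℝ,
      Tendsto (fun n ↦ ∑ i ∈ range n, g (w i) • wstar i) atTop (𝓝 g))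
    (ε : ℕ → ℝ) (hε : ∀ k, 0 < ε k) :
    ∃ N : ℕ → ℕ, StrictMono N ∧ ∀ k m₀ n₀ m n, m₀ ≤ k → n₀ ≤ k → N k ≤ m → N k ≤ n →
      ‖((frameProj x f m₀ n₀).comp S).comp (tailProj w wstar m n)‖ ≤ ε k := by
  have hev : ∀ k, ∀ᶠ p : ℕ × ℕ in atTop, ∀ m₀ ∈ range (k + 1), ∀ n₀ ∈ range (k + 1),
      ‖((frameProj x f m₀ n₀).comp S).comp (tailProj w wstar p.1 p.2)‖ ≤ ε k := fun k ↦ by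
    simp only [eventually_all_finset, frameProj_comp]
    exact fun m₀ _ n₀ _ ↦ ((tendsto_norm_sum_smulRight_comp_tailProj hshrinking _ _ _
      ).eventually_lt_const (hε k)).mono fun _ ↦ le_of_lt
  obtain ⟨N, hN, hgood⟩ := extraction_forall_of_eventually' fun k ↦
    (eventually_atTop_prod_self.mp (hev k)).imp fun M hM N hN m n hm hn ↦
      hM m n (hN.trans hm) (hN.trans hn)
  exact ⟨N, hN, fun k m₀ n₀ m n hm₀ hn₀ hm hn ↦ hgood k m n hm hn m₀
    (mem_range_succ_iff.mpr hm₀) n₀ (mem_range_succ_iff.mpr hn₀)⟩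

end Frame

theorem stmt_12_general (X W : Type*) [NormedAddCommGroup X] [NormedSpace ℝ X]
    [NormedAddCommGroup W] [NormedSpace ℝ W] [CompleteSpace W]
    (x : ℕ → X) (f : ℕ → X →L[ℝ] ℝ)
    (w : ℕ → W) (wstar : ℕ → W →L[ℝ] ℝ)
    (hbi : ∀ i j, wstar i (w j) = if i = j then 1 else 0)
    (hbasis : ∀ v : W,
      Tendsto (fun n => ∑ i ∈ Finset.range n, wstar i v • w i) atTop (nhds v))
    (hwshrinking : ∀ g : W →L[ℝ] ℝ,
      Tendsto (fun n => ∑ i ∈ Finset.range n, g (w i) • wstar i) atTop (nhds g))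
    (T : X →L[ℝ] W) (S : W →L[ℝ] X)
    (hT : ∀ v : X, Tendsto (fun n => ∑ i ∈ Finset.range n, f i v • w i) atTop (nhds (T v)))
    (hS : ∀ i, S (w i) = x i) :
    ∃ N : ℕ → ℕ, StrictMono N ∧
      (∀ k m₀ n₀ m n : ℕ, m₀ ≤ n₀ → n₀ ≤ k → N k ≤ m → m ≤ n → ∀ v : X,
        ‖∑ j ∈ Finset.Icc m₀ n₀, f j (∑ i ∈ Finset.Icc m n, f i v • x i) • x j‖
          ≤ (2 : ℝ)⁻¹ ^ k * ‖v‖) ∧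
      ∃ K : ℝ, 1 ≤ K ∧ ∀ (a : ℕ → ℝ) (s : Finset ℕ), (∀ i ∉ s, a i = 0) →
        max (sSup {r : ℝ | ∃ m n : ℕ, m ≤ n ∧ r = ‖∑ i ∈ Finset.Icc m n, a i • x i‖})
          (sSup {r : ℝ | ∃ k m₀ n₀ m n : ℕ, m₀ ≤ n₀ ∧ n₀ ≤ k ∧ N k ≤ m ∧ m ≤ n ∧
            r = (2 : ℝ) ^ k *
              ‖∑ j ∈ Finset.Icc m₀ n₀, f j (∑ i ∈ Finset.Icc m n, a i • x i) • x j‖})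
        ≤ K * ‖∑ i ∈ s, a i • w i‖ := by
  obtain ⟨C, hC⟩ := exists_norm_tailProj_le hbasis
  obtain ⟨N, hN, hsmall⟩ := exists_strictMono_norm_frameProj_comp_tailProj_le (x := x) (f := f)
    (S := S) hwshrinking (fun k ↦ (2 : ℝ)⁻¹ ^ k / (‖T‖ + 1)) fun k ↦ by positivity
  refine ⟨N, hN, fun k m₀ n₀ m n hm₀ hn₀ hm hmn v ↦ norm_frameProj_sum_Icc_le_of_tendsto hbi hS
    (hT v) (hsmall k m₀ n₀ m n (hm₀.trans hn₀) hn₀ hm (hm.trans hmn)),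
    max 1 (‖S‖ * C), le_max_left _ _, fun a s ha ↦ ?_⟩
  set u := ∑ j ∈ s, a j • w j
  have hcoeff : ∀ i, wstar i u = a i := fun i ↦ by
    by_cases hi : i ∈ s <;> simp [u, apply_sum_smul_of_biorthogonal hbi, hi, ha]
  refine max_le (Real.sSup_le ?_ (by positivity)) (Real.sSup_le ?_ (by positivity))
  · rintro _ ⟨m, n, -, rfl⟩
    exact (norm_sum_Icc_smul_le hS hcoeff (hC (m, n))).trans (by gcongr; exact le_max_right _ _)
  · rintro _ ⟨k, m₀, n₀, m, n, hm₀, hn₀, hm, hmn, rfl⟩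
    have hP := (hsmall k m₀ n₀ m n (hm₀.trans hn₀) hn₀ hm (hm.trans hmn)).trans
      (div_le_self (by positivity) (le_add_of_nonneg_left (norm_nonneg T)))
    calc _ ≤ 2 ^ k * ((2 : ℝ)⁻¹ ^ k * ‖u‖) := by
          gcongr
          exact norm_frameProj_sum_Icc_le hS hcoeff hP
      _ = ‖u‖ := by rw [inv_pow, mul_inv_cancel_left₀ (by positivity)]
      _ ≤ max 1 (‖S‖ * C) * ‖u‖ := le_mul_of_one_le_left (norm_nonneg _) (le_max_left _ _)

/-- Theorem 4.1: if `W` is an associated space with shrinking associated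
basis `(w_j)`, then for some `(N_k)` satisfying Proposition 3.1, the basis of `Z_{(N_k)}`
is dominated by `(w_j)`. -/
theorem stmt_12 (X W : Type*) [NormedAddCommGroup X] [NormedSpace ℝ X] [CompleteSpace X]
    [NormedAddCommGroup W] [NormedSpace ℝ W] [CompleteSpace W]
    (x : ℕ → X) (f : ℕ → X →L[ℝ] ℝ)
    (hframe : ∀ v : X, Tendsto (fun n => ∑ i ∈ Finset.range n, f i v • x i) atTop (nhds v))
    (hshrink : ∀ g : X →L[ℝ] ℝ,
      Tendsto (fun n => ∑ i ∈ Finset.range n, g (x i) • f i) atTop (nhds g))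
    (w : ℕ → W) (wstar : ℕ → W →L[ℝ] ℝ)
    (hbi : ∀ i j, wstar i (w j) = if i = j then 1 else 0)
    (hbasis : ∀ v : W,
      Tendsto (fun n => ∑ i ∈ Finset.range n, wstar i v • w i) atTop (nhds v))
    (hwshrinking : ∀ g : W →L[ℝ] ℝ,
      Tendsto (fun n => ∑ i ∈ Finset.range n, g (w i) • wstar i) atTop (nhds g))
    (T : X →L[ℝ] W) (S : W →L[ℝ] X)
    (hT : ∀ v : X, Tendsto (fun n => ∑ i ∈ Finset.range n, f i v • w i) atTop (nhds (T v)))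
    (hS : ∀ i, S (w i) = x i) :
    ∃ N : ℕ → ℕ, StrictMono N ∧
      (∀ k m₀ n₀ m n : ℕ, m₀ ≤ n₀ → n₀ ≤ k → N k ≤ m → m ≤ n → ∀ v : X,
        ‖∑ j ∈ Finset.Icc m₀ n₀, f j (∑ i ∈ Finset.Icc m n, f i v • x i) • x j‖
          ≤ (2 : ℝ)⁻¹ ^ k * ‖v‖) ∧
      ∃ K : ℝ, 1 ≤ K ∧ ∀ (a : ℕ → ℝ) (s : Finset ℕ), (∀ i ∉ s, a i = 0) →
        max (sSup {r : ℝ | ∃ m n : ℕ, m ≤ n ∧ r = ‖∑ i ∈ Finset.Icc m n, a i • x i‖})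
          (sSup {r : ℝ | ∃ k m₀ n₀ m n : ℕ, m₀ ≤ n₀ ∧ n₀ ≤ k ∧ N k ≤ m ∧ m ≤ n ∧
            r = (2 : ℝ) ^ k *
              ‖∑ j ∈ Finset.Icc m₀ n₀, f j (∑ i ∈ Finset.Icc m n, a i • x i) • x j‖})
        ≤ K * ‖∑ i ∈ s, a i • w i‖ :=
  stmt_12_general X W x f w wstar hbi hbasis hwshrinking T S hT hS
end

section
/- Let X be a Banach space with a shrinking Schauder frame (x_j, f_j). Then the dual X* has the bounded approximation property: there exist finite-rank operators B_n on X* with lim_n ‖f − B_n f‖ = 0 for all f ∈ X* and sup_n ‖B_n‖ < ∞. -/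
open Filter Finset

/-- if `X` has a shrinking Schauder frame then `X*` has the bounded
approximation property. -/
theorem stmt_17 (X : Type*) [NormedAddCommGroup X] [NormedSpace ℝ X] [CompleteSpace X]
    (x : ℕ → X) (f : ℕ → X →L[ℝ] ℝ)
    (hframe : ∀ v : X, Tendsto (fun n => ∑ i ∈ Finset.range n, f i v • x i) atTop (nhds v))
    (hshrink : ∀ g : X →L[ℝ] ℝ,
      Tendsto (fun n => ∑ i ∈ Finset.range n, g (x i) • f i) atTop (nhds g)) :
    ∃ B : ℕ → (X →L[ℝ] ℝ) →L[ℝ] (X →L[ℝ] ℝ),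
      (∀ n, FiniteDimensional ℝ (LinearMap.range (B n).toLinearMap)) ∧
      (∃ C : ℝ, ∀ n, ‖B n‖ ≤ C) ∧
      (∀ g : X →L[ℝ] ℝ, Tendsto (fun n => ‖g - B n g‖) atTop (nhds 0)) := by
  set T : ℕ → (X →L[ℝ] ℝ) →L[ℝ] (X →L[ℝ] ℝ) := fun i =>
    ((ContinuousLinearMap.id ℝ ℝ).smulRight (f i)).comp
      (ContinuousLinearMap.apply ℝ ℝ (x i)) with hT
  set B : ℕ → (X →L[ℝ] ℝ) →L[ℝ] (X →L[ℝ] ℝ) := fun n => ∑ i ∈ Finset.range n, T i with hB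
  have hBapp : ∀ n g, B n g = ∑ i ∈ Finset.range n, g (x i) • f i := by
    intro n g
    simp [hB, hT, ContinuousLinearMap.sum_apply]
  refine ⟨B, ?_, ?_, ?_⟩
  · intro n
    have hle : LinearMap.range (B n).toLinearMap ≤ Submodule.span ℝ (f '' (Finset.range n : Set ℕ)) := by
      rintro _ ⟨g, rfl⟩
      rw [ContinuousLinearMap.coe_coe, hBapp]
      exact Submodule.sum_mem _ fun i hi => Submodule.smul_mem _ _
        (Submodule.subset_span ⟨i, by simpa using hi, rfl⟩)
    have : FiniteDimensional ℝ (Submodule.span ℝ (f '' (Finset.range n : Set ℕ))) := by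
      apply FiniteDimensional.span_of_finite
      exact Set.Finite.image _ (Finset.finite_toSet _)
    exact Submodule.finiteDimensional_of_le hle
  · apply banach_steinhaus
    intro g
    obtain ⟨C, hC⟩ := (hshrink g).norm.bddAbove_range
    refine ⟨C, fun n => ?_⟩
    rw [hBapp]
    exact hC ⟨n, rfl⟩
  · intro g
    have := (hshrink g)
    rw [tendsto_iff_norm_sub_tendsto_zero] at this
    simpa [hBapp, norm_sub_rev] using this
end
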